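/- arXiv:2602.15028 — 3 statements merged into one kernel-verified Lean document; each statement's English description precedes it below -/
import Mathlib

section
/- Under the stated probabilistic setup, the cumulative relevant attention mass converges to zero in probability: for every ε > 0, P(A_R(n) > ε) → 0 as n → ∞. -/
open MeasureTheory ProbabilityTheory Filter Real Finset Topology

/-! By the strong law of large numbers the noise partial sums `∑_{j < k} exp (Sn j)` grow like
`k · E[exp (Sn 0)]`, with a positive mean, so almost surely they tend to infinity. The relevant
mass is `T / (T + ∑_{j < n - m} exp (Sn j))` with `T = ∑ᵢ exp (Sr i)` fixed, hence it tends to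
`0` almost surely, and almost sure convergence implies convergence in probability. -/

lemma tendsto_atTop_of_tendsto_div_natCast {u : ℕ → ℝ} {c : ℝ} (hc : 0 < c)
    (hu : Tendsto (fun n => u n / n) atTop (𝓝 c)) : Tendsto u atTop atTop := by
  refine (hu.pos_mul_atTop hc tendsto_natCast_atTop_atTop).congr' ?_
  filter_upwards [eventually_ne_atTop 0] with n hn
  field_simp

lemma ae_tendsto_sum_range_atTop_of_integral_pos {Ω : Type*} [MeasurableSpace Ω]
    {μ : Measure Ω} (X : ℕ → Ω → ℝ) (hint : Integrable (X 0) μ)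
    (hindep : Pairwise (Function.onFun (· ⟂ᵢ[μ] ·) X)) (hident : ∀ i, IdentDistrib (X i) (X 0) μ μ)
    (hpos : 0 < μ[X 0]) :
    ∀ᵐ ω ∂μ, Tendsto (fun n => ∑ i ∈ range n, X i ω) atTop atTop := by
  filter_upwards [strong_law_ae_real X hint hindep hident] with ω hω
  exact tendsto_atTop_of_tendsto_div_natCast hpos hω

lemma tendsto_sum_div_sum_add_atTop_nhds_zero {ι α : Type*} (s : Finset ι) (a : ι → ℝ)
    {b : α → ℝ} {l : Filter α} (hb : Tendsto b l atTop) :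
    Tendsto (fun k => ∑ i ∈ s, a i / (∑ j ∈ s, a j + b k)) l (𝓝 0) := by
  simp only [← Finset.sum_div]
  exact tendsto_const_nhds.div_atTop (tendsto_atTop_add_const_left _ _ hb)

lemma tendsto_measure_lt_of_ae_tendsto_zero {Ω : Type*} [MeasurableSpace Ω] {μ : Measure Ω}
    [IsFiniteMeasure μ] {f : ℕ → Ω → ℝ} (hf : ∀ n, AEStronglyMeasurable (f n) μ)
    (hlim : ∀ᵐ ω ∂μ, Tendsto (f · ω) atTop (𝓝 0)) {ε : ℝ} (hε : 0 < ε) :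
    Tendsto (fun n => μ {ω | ε < f n ω}) atTop (𝓝 0) := by
  have hdist := tendstoInMeasure_of_tendsto_ae hf hlim (ENNReal.ofReal ε) (by simpa using hε)
  refine tendsto_of_tendsto_of_tendsto_of_le_of_le tendsto_const_nhds hdist (fun _ => zero_le)
    fun n => measure_mono fun ω (hω : ε < f n ω) => ?_
  simp only [Set.mem_ofPred_eq, edist_dist, Real.dist_eq, sub_zero]
  exact ENNReal.ofReal_le_ofReal (hω.le.trans (le_abs_self _))

theorem attention_dilution_in_probability_general
    {Ω : Type*} [MeasurableSpace Ω] (P : Measure Ω) [IsProbabilityMeasure P]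
    (m : ℕ)
    (Sr : Fin m → Ω → ℝ) (Sn : ℕ → Ω → ℝ)
    (hSr_meas : ∀ i, Measurable (Sr i)) (hSn_meas : ∀ j, Measurable (Sn j))
    (hindep : iIndepFun
      (fun k : Fin m ⊕ ℕ => Sum.elim Sr Sn k) P)
    (hSn_id : ∀ j : ℕ, IdentDistrib (Sn j) (Sn 0) P P)
    (hμn : Integrable (fun ω => exp (Sn 0 ω)) P) :
    ∀ ε > (0 : ℝ),
      Tendsto
        (fun n : ℕ =>
          P {ω |
            (∑ i : Fin m,
                exp (Sr i ω) /
                  ((∑ k : Fin m, exp (Sr k ω)) +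
                    ∑ j ∈ Finset.range (n - m), exp (Sn j ω))) > ε})
        atTop (nhds 0) := by
  intro ε hε
  have hnoise_indep : Pairwise (Function.onFun (· ⟂ᵢ[P] ·) fun j ω => exp (Sn j ω)) := fun i j hij =>
    (hindep.indepFun (i := Sum.inr i) (j := Sum.inr j) (by simpa using hij)).comp
      measurable_exp measurable_exp
  have hnoise_sum := ae_tendsto_sum_range_atTop_of_integral_pos _ hμn hnoise_indep
    (fun j => (hSn_id j).comp measurable_exp) (integral_exp_pos hμn)
  refine tendsto_measure_lt_of_ae_tendsto_zero (fun n => Measurable.aestronglyMeasurable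
    (by fun_prop (disch := assumption))) ?_ hε
  filter_upwards [hnoise_sum] with ω hω
  exact tendsto_sum_div_sum_add_atTop_nhds_zero _ _ (hω.comp (tendsto_sub_atTop_nat m))

/-- **Attention dilution: convergence in probability.**
Fix `m > 0`. Relevant scores `Sr : Fin m → Ω → ℝ` and noise scores `Sn : ℕ → Ω → ℝ`
are jointly independent, each family is identically distributed, and the
exponentiated scores are integrable (`μ_r < ∞`, `μ_n < ∞`).
For context length `n > m`, the softmax weight of position `i` is
`exp sᵢ / (Σ_{k ∈ R} exp (Sr k) + Σ_{j ∈ N} exp (Sn j))`, and the cumulative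
relevant attention mass is `A_R(n) = Σ_{i ∈ R} αᵢ`.
Then `A_R(n) → 0` in probability: for every `ε > 0`,
`P (A_R(n) > ε) → 0` as `n → ∞`. -/
theorem attention_dilution_in_probability
    {Ω : Type*} [MeasurableSpace Ω] (P : Measure Ω) [IsProbabilityMeasure P]
    (m : ℕ) (hm : 0 < m)
    (Sr : Fin m → Ω → ℝ) (Sn : ℕ → Ω → ℝ)
    (hSr_meas : ∀ i, Measurable (Sr i)) (hSn_meas : ∀ j, Measurable (Sn j))
    (hindep : iIndepFun
      (fun k : Fin m ⊕ ℕ => Sum.elim Sr Sn k) P)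
    (hSr_id : ∀ i : Fin m, IdentDistrib (Sr i) (Sr ⟨0, hm⟩) P P)
    (hSn_id : ∀ j : ℕ, IdentDistrib (Sn j) (Sn 0) P P)
    (hμr : Integrable (fun ω => exp (Sr ⟨0, hm⟩ ω)) P)
    (hμn : Integrable (fun ω => exp (Sn 0 ω)) P) :
    ∀ ε > (0 : ℝ),
      Tendsto
        (fun n : ℕ =>
          P {ω |
            (∑ i : Fin m,
                exp (Sr i ω) /
                  ((∑ k : Fin m, exp (Sr k ω)) +
                    ∑ j ∈ Finset.range (n - m), exp (Sn j ω))) > ε})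
        atTop (nhds 0) :=
  attention_dilution_in_probability_general P m Sr Sn hSr_meas hSn_meas hindep hSn_id hμn
end

section
/- Under the stated probabilistic setup, the cumulative relevant attention mass decays at rate 1/n in probability: the sequence n · A_R(n) is bounded in probability, i.e., for every ε > 0 there exists C > 0 such that P(n · A_R(n) > C) ≤ ε for all sufficiently large n. -/
open MeasureTheory ProbabilityTheory Filter Real Finset
open scoped Topology ENNReal

/-! The noise mass `T n = ∑_{j < n - m} exp (Sn j)` grows linearly: by the strong law of large
numbers `T n / n → E[exp (Sn 0)] > 0` almost surely. Writing the relevant mass as `W`,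
`n · A_R(n) = n W / (W + T n) = W / (W / n + T n / n) → W / E[exp (Sn 0)]` almost surely.
Almost sure convergence implies convergence in measure, and a sequence converging in measure to
an almost everywhere finite limit is bounded in probability. -/

lemma tendsto_comp_sub_div_natCast {f : ℕ → ℝ} {a : ℝ} (m : ℕ)
    (hf : Tendsto (fun k : ℕ => f k / k) atTop (𝓝 a)) :
    Tendsto (fun n : ℕ => f (n - m) / n) atTop (𝓝 a) := by
  rw [← tendsto_add_atTop_iff_nat m]
  have hlim := hf.mul (tendsto_natCast_div_add_atTop (m : ℝ))
  rw [mul_one] at hlim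
  refine hlim.congr' ?_
  filter_upwards [eventually_ne_atTop 0] with k hk
  have hk' : (k : ℝ) ≠ 0 := Nat.cast_ne_zero.2 hk
  rw [Nat.add_sub_cancel, Nat.cast_add]
  field_simp

lemma tendsto_natCast_mul_div_add {w a : ℝ} {t : ℕ → ℝ} (ha : a ≠ 0)
    (ht : Tendsto (fun n : ℕ => t n / n) atTop (𝓝 a)) :
    Tendsto (fun n : ℕ => n * (w / (w + t n))) atTop (𝓝 (w / a)) := by
  have hden : Tendsto (fun n : ℕ => w / n + t n / n) atTop (𝓝 a) := by
    simpa using (tendsto_const_div_atTop_nhds_zero_nat w).add ht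
  refine (tendsto_const_nhds.div hden ha).congr fun n => ?_
  simp only [Pi.div_apply]
  rw [← add_div, div_div_eq_mul_div]
  ring

section ConvergenceInMeasure

variable {Ω ι : Type*} [MeasurableSpace Ω] {μ : Measure Ω} [IsFiniteMeasure μ]

lemma tendsto_measure_setOf_lt_atTop {L : Ω → ℝ} (hL : AEMeasurable L μ) :
    Tendsto (fun K : ℝ => μ {ω | K < L ω}) atTop (𝓝 0) := by
  have hempty : (⋂ K : ℝ, {ω | K < L ω}) = ∅ :=
    Set.eq_empty_of_forall_notMem fun ω hω =>
      lt_irrefl (L ω) (Set.mem_iInter.1 hω (L ω))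
  have h := tendsto_measure_iInter_atTop (μ := μ) (s := fun K : ℝ => {ω | K < L ω})
    (fun K => hL.nullMeasurable measurableSet_Ioi) (fun K K' hKK' ω hω => hKK'.trans_lt hω)
    ⟨0, measure_ne_top μ _⟩
  rwa [hempty, measure_empty] at h

lemma TendstoInMeasure.exists_pos_eventually_measure_lt_le {l : Filter ι} {Z : ι → Ω → ℝ}
    {L : Ω → ℝ} (hZ : TendstoInMeasure μ Z l L) (hL : AEMeasurable L μ) {ε : ℝ≥0∞}
    (hε : 0 < ε) : ∃ C > 0, ∀ᶠ n in l, μ {ω | C < Z n ω} ≤ ε := by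
  have hε2 : 0 < ε / 2 := ENNReal.half_pos hε.ne'
  obtain ⟨K, hK⟩ := ((tendsto_measure_setOf_lt_atTop hL).eventually_lt_const hε2).exists
  refine ⟨max K 0 + 1, by positivity, ?_⟩
  filter_upwards [(hZ 1 one_pos).eventually_lt_const hε2] with n hn
  have hsub : {ω | max K 0 + 1 < Z n ω} ⊆
      {ω | 1 ≤ edist (Z n ω) (L ω)} ∪ {ω | K < L ω} := by
    intro ω hω
    by_contra hcon
    simp only [Set.mem_union, Set.mem_ofPred_eq, not_or, not_le, not_lt, ← ENNReal.ofReal_one,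
      edist_lt_ofReal, Real.dist_eq] at hω hcon
    linarith [(abs_lt.1 hcon.1).2, le_max_left K 0]
  calc μ {ω | max K 0 + 1 < Z n ω}
      ≤ μ {ω | 1 ≤ edist (Z n ω) (L ω)} + μ {ω | K < L ω} :=
        (measure_mono hsub).trans (measure_union_le _ _)
    _ ≤ ε / 2 + ε / 2 := add_le_add hn.le hK.le
    _ = ε := ENNReal.add_halves ε

end ConvergenceInMeasure

theorem attention_dilution_rate_bounded_in_probability_general
    {Ω : Type*} [MeasurableSpace Ω] (P : Measure Ω) [IsProbabilityMeasure P]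
    (m : ℕ)
    (Sr : Fin m → Ω → ℝ) (Sn : ℕ → Ω → ℝ)
    (hSr_meas : ∀ i, Measurable (Sr i))
    (hindep : iIndepFun
      (fun k : Fin m ⊕ ℕ => Sum.elim Sr Sn k) P)
    (hSn_id : ∀ j : ℕ, IdentDistrib (Sn j) (Sn 0) P P)
    (hμn : Integrable (fun ω => exp (Sn 0 ω)) P) :
    ∀ ε > (0 : ℝ), ∃ C > (0 : ℝ), ∀ᶠ n : ℕ in atTop,
      P {ω |
          (n : ℝ) *
            (∑ i : Fin m,
              exp (Sr i ω) /
                ((∑ k : Fin m, exp (Sr k ω)) +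
                  ∑ j ∈ Finset.range (n - m), exp (Sn j ω))) > C}
        ≤ ENNReal.ofReal ε := by
  intro ε hε
  have hnoise_indep : iIndepFun (fun j ω => exp (Sn j ω)) P :=
    (hindep.precomp Sum.inr_injective).comp (fun _ => exp) fun _ => measurable_exp
  have hslln := strong_law_ae_real (fun j ω => exp (Sn j ω)) hμn
    (fun i j hij => hnoise_indep.indepFun hij) fun j => (hSn_id j).comp measurable_exp
  have hae : ∀ᵐ ω ∂P, Tendsto (fun n : ℕ => (n : ℝ) * ∑ i,
      exp (Sr i ω) / ((∑ k, exp (Sr k ω)) + ∑ j ∈ range (n - m), exp (Sn j ω))) atTop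
      (𝓝 ((∑ k, exp (Sr k ω)) / ∫ ω, exp (Sn 0 ω) ∂P)) := by
    filter_upwards [hslln] with ω hω
    simp_rw [← Finset.sum_div]
    exact tendsto_natCast_mul_div_add (integral_exp_pos hμn).ne'
      (tendsto_comp_sub_div_natCast m hω)
  have hSn_aemeas : ∀ j, AEMeasurable (Sn j) P := fun j => (hSn_id j).aemeasurable_fst
  have hmeas : ∀ n : ℕ, AEStronglyMeasurable (fun ω => (n : ℝ) * ∑ i,
      exp (Sr i ω) / ((∑ k, exp (Sr k ω)) + ∑ j ∈ range (n - m), exp (Sn j ω))) P :=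
    fun n => AEMeasurable.aestronglyMeasurable (by fun_prop)
  exact TendstoInMeasure.exists_pos_eventually_measure_lt_le
    (tendstoInMeasure_of_tendsto_ae hmeas hae) (by fun_prop) (ENNReal.ofReal_pos.2 hε)

/-- **Attention dilution: `1/n` rate in probability.**
Under the i.i.d. setup for relevant scores `Sr` (at the `m` relevant positions)
and noise scores `Sn` (at the remaining `n - m` positions), with integrable
exponentiated scores, the sequence `n · A_R(n)` is bounded in probability:
for every `ε > 0` there exists `C > 0` such that
`P (n · A_R(n) > C) ≤ ε` for all sufficiently large `n`. -/
theorem attention_dilution_rate_bounded_in_probability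
    {Ω : Type*} [MeasurableSpace Ω] (P : Measure Ω) [IsProbabilityMeasure P]
    (m : ℕ) (hm : 0 < m)
    (Sr : Fin m → Ω → ℝ) (Sn : ℕ → Ω → ℝ)
    (hSr_meas : ∀ i, Measurable (Sr i)) (hSn_meas : ∀ j, Measurable (Sn j))
    (hindep : iIndepFun
      (fun k : Fin m ⊕ ℕ => Sum.elim Sr Sn k) P)
    (hSr_id : ∀ i : Fin m, IdentDistrib (Sr i) (Sr ⟨0, hm⟩) P P)
    (hSn_id : ∀ j : ℕ, IdentDistrib (Sn j) (Sn 0) P P)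
    (hμr : Integrable (fun ω => exp (Sr ⟨0, hm⟩ ω)) P)
    (hμn : Integrable (fun ω => exp (Sn 0 ω)) P) :
    ∀ ε > (0 : ℝ), ∃ C > (0 : ℝ), ∀ᶠ n : ℕ in atTop,
      P {ω |
          (n : ℝ) *
            (∑ i : Fin m,
              exp (Sr i ω) /
                ((∑ k : Fin m, exp (Sr k ω)) +
                  ∑ j ∈ Finset.range (n - m), exp (Sn j ω))) > C}
        ≤ ENNReal.ofReal ε :=
  attention_dilution_rate_bounded_in_probability_general P m Sr Sn hSr_meas hindep hSn_id hμn
end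

section
/- Under the stated probabilistic setup, let v_1, …, v_m be random vectors in ℝ^d (the value vectors attached to the m relevant positions, not depending on n) with E‖v_i‖² < ∞ for each i. Then the norm of the task-relevant signal component of the attention output vanishes: ‖Σ_{i∈R} α_i v_i‖ → 0 in probability as n → ∞. -/
open MeasureTheory ProbabilityTheory Filter Real Finset

/-!
Each weight `α_i` has the same numerator `exp (Sr i)` for every `n`, while its denominator
contains the noise partial sum `∑_{j < n - m} exp (Sn j)`. By the strong law of large numbers
this partial sum grows like `(n - m) E[exp (Sn 0)]`, with a positive mean, so almost surely the
denominator tends to infinity and the signal component `(∑_i exp (Sr i) • v i) / denominator`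
tends to zero. Almost sure convergence implies convergence in probability.
-/

theorem tendsto_sum_range_atTop_of_tendsto_average {x : ℕ → ℝ} {c : ℝ} (hc : 0 < c)
    (hx : Tendsto (fun k : ℕ => (k : ℝ)⁻¹ • ∑ j ∈ range k, x j) atTop (nhds c)) :
    Tendsto (fun k : ℕ => ∑ j ∈ range k, x j) atTop atTop := by
  refine (tendsto_natCast_atTop_atTop.atTop_mul_pos hc hx).congr' ?_
  filter_upwards [eventually_ge_atTop 1] with k hk
  have hk : (k : ℝ) ≠ 0 := by positivity
  rw [smul_eq_mul, mul_inv_cancel_left₀ hk]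

theorem ae_tendsto_sum_range_atTop_of_pairwise_iid {Ω : Type*} [MeasurableSpace Ω]
    {P : Measure Ω} {X : ℕ → Ω → ℝ} (hint : Integrable (X 0) P)
    (hindep : Pairwise fun i j => X i ⟂ᵢ[P] X j) (hident : ∀ j, IdentDistrib (X j) (X 0) P P)
    (hmean : 0 < P[X 0]) :
    ∀ᵐ ω ∂P, Tendsto (fun k : ℕ => ∑ j ∈ range k, X j ω) atTop atTop := by
  filter_upwards [strong_law_ae X hint hindep hident] with ω hω
  exact tendsto_sum_range_atTop_of_tendsto_average hmean hω

theorem tendsto_sum_div_smul_zero {ι E : Type*} [NormedAddCommGroup E] [NormedSpace ℝ E]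
    (s : Finset ι) (a : ι → ℝ) (w : ι → E) {D : ℕ → ℝ} (hD : Tendsto D atTop atTop) :
    Tendsto (fun n => ∑ i ∈ s, (a i / D n) • w i) atTop (nhds 0) := by
  have hscale : Tendsto (fun n => (D n)⁻¹ • ∑ i ∈ s, a i • w i) atTop (nhds 0) := by
    simpa using (tendsto_inv_atTop_zero.comp hD).smul_const (∑ i ∈ s, a i • w i)
  refine hscale.congr fun n => ?_
  simp only [Finset.smul_sum, smul_smul, div_eq_inv_mul]

theorem tendsto_measure_norm_gt_of_ae_tendsto_zero {Ω E : Type*} [MeasurableSpace Ω]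
    {P : Measure Ω} [IsFiniteMeasure P] [NormedAddCommGroup E] {f : ℕ → Ω → E}
    (hf : ∀ n, AEStronglyMeasurable (f n) P)
    (hlim : ∀ᵐ ω ∂P, Tendsto (fun n => f n ω) atTop (nhds 0)) {ε : ℝ} (hε : 0 < ε) :
    Tendsto (fun n => P {ω | ‖f n ω‖ > ε}) atTop (nhds 0) := by
  have hmeas := tendstoInMeasure_iff_norm.mp (tendstoInMeasure_of_tendsto_ae hf hlim) ε hε
  refine tendsto_of_tendsto_of_tendsto_of_le_of_le tendsto_const_nhds hmeas
    (fun _ => zero_le) fun n => measure_mono fun ω hω => ?_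
  simpa using le_of_lt hω

theorem relevant_signal_component_vanishes_in_probability_general
    {Ω : Type*} [MeasurableSpace Ω] (P : Measure Ω) [IsProbabilityMeasure P]
    (m d : ℕ)
    (Sr : Fin m → Ω → ℝ) (Sn : ℕ → Ω → ℝ)
    (hSr_meas : ∀ i, Measurable (Sr i)) (hSn_meas : ∀ j, Measurable (Sn j))
    (hindep : iIndepFun
      (fun k : Fin m ⊕ ℕ => Sum.elim Sr Sn k) P)
    (hSn_id : ∀ j : ℕ, IdentDistrib (Sn j) (Sn 0) P P)
    (hμn : Integrable (fun ω => exp (Sn 0 ω)) P)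
    (v : Fin m → Ω → EuclideanSpace ℝ (Fin d))
    (hv_meas : ∀ i, Measurable (v i)) :
    ∀ ε > (0 : ℝ),
      Tendsto
        (fun n : ℕ =>
          P {ω |
            ‖∑ i : Fin m,
                (exp (Sr i ω) /
                    ((∑ k : Fin m, exp (Sr k ω)) +
                      ∑ j ∈ Finset.range (n - m), exp (Sn j ω))) • v i ω‖ > ε})
        atTop (nhds 0) := by
  intro ε hε
  have hnoise_indep : Pairwise fun i j => (fun ω => exp (Sn i ω)) ⟂ᵢ[P] fun ω => exp (Sn j ω) :=
    fun i j hij =>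
      (hindep.indepFun (i := Sum.inr i) (j := Sum.inr j) (by simpa using hij)).comp
        measurable_exp measurable_exp
  have hnoise : ∀ᵐ ω ∂P, Tendsto (fun k => ∑ j ∈ range k, exp (Sn j ω)) atTop atTop :=
    ae_tendsto_sum_range_atTop_of_pairwise_iid hμn hnoise_indep
      (fun j => (hSn_id j).comp measurable_exp) (integral_exp_pos hμn)
  refine tendsto_measure_norm_gt_of_ae_tendsto_zero (fun n => by fun_prop) ?_ hε
  filter_upwards [hnoise] with ω hω
  exact tendsto_sum_div_smul_zero _ _ _
    (tendsto_atTop_add_const_left _ _ (hω.comp (tendsto_sub_atTop_nat m)))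

/-- **Vanishing task-relevant signal component.**
Under the i.i.d. score setup (relevant scores `Sr` at the `m` relevant positions,
noise scores `Sn` elsewhere, jointly independent, identically distributed within
each family, integrable exponentiated scores), let `v i : Ω → ℝ^d` be the value
vectors at the relevant positions (not depending on `n`) with `E‖v i‖² < ∞`.
Then `‖Σ_{i ∈ R} α_i • v_i‖ → 0` in probability as `n → ∞`, where
`α_i = exp (Sr i) / (Σ_k exp (Sr k) + Σ_{j<n−m} exp (Sn j))`. -/
theorem relevant_signal_component_vanishes_in_probability
    {Ω : Type*} [MeasurableSpace Ω] (P : Measure Ω) [IsProbabilityMeasure P]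
    (m d : ℕ) (hm : 0 < m)
    (Sr : Fin m → Ω → ℝ) (Sn : ℕ → Ω → ℝ)
    (hSr_meas : ∀ i, Measurable (Sr i)) (hSn_meas : ∀ j, Measurable (Sn j))
    (hindep : iIndepFun
      (fun k : Fin m ⊕ ℕ => Sum.elim Sr Sn k) P)
    (hSr_id : ∀ i : Fin m, IdentDistrib (Sr i) (Sr ⟨0, hm⟩) P P)
    (hSn_id : ∀ j : ℕ, IdentDistrib (Sn j) (Sn 0) P P)
    (hμr : Integrable (fun ω => exp (Sr ⟨0, hm⟩ ω)) P)
    (hμn : Integrable (fun ω => exp (Sn 0 ω)) P)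
    (v : Fin m → Ω → EuclideanSpace ℝ (Fin d))
    (hv_meas : ∀ i, Measurable (v i))
    (hv_sq_int : ∀ i, Integrable (fun ω => ‖v i ω‖ ^ 2) P) :
    ∀ ε > (0 : ℝ),
      Tendsto
        (fun n : ℕ =>
          P {ω |
            ‖∑ i : Fin m,
                (exp (Sr i ω) /
                    ((∑ k : Fin m, exp (Sr k ω)) +
                      ∑ j ∈ Finset.range (n - m), exp (Sn j ω))) • v i ω‖ > ε})
        atTop (nhds 0) :=
  relevant_signal_component_vanishes_in_probability_general P m d Sr Sn hSr_meas hSn_meas hindep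
    hSn_id hμn v hv_meas
end
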